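/- (Lower bound on g_k via sorted partial sums) Let R ∪ S partition [n] with m_S := min{aⱼ : j ∈ S} > 0. For Δ ∈ ℝ₊^S and 0 ≤ k ≤ ν, define g_k(Δ) := min{Σ_{j∈S, j>k} Δⱼ(1 − zⱼ) : z ∈ P_k}, and let Δ[k, l] denote the sum of the smallest l − |{j ∈ S : j ≤ k}| elements of {Δⱼ : j ∈ S, j > k}. Then g_k(Δ) ≥ Δ[k, |S| − ⌊(p − s_k)/m_S⌋]. -/

import Mathlib

/-!
Each index `j ∈ S` with `j > k` and `z_j = 1` uses at least `m_S` of the residual capacity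
`p - s_k ≥ 0`, so `z ∈ P_k` has at most `⌊(p - s_k)/m_S⌋` ones there and vanishes on at least
`|T| - ⌊(p - s_k)/m_S⌋` indices of `T = {j ∈ S : j > k}`. Those indices form a competitor for
`Δ[k, ·]` whose `Δ`-sum is at most `∑_{j ∈ T} Δ_j (1 - z_j)`.
-/

open Finset

/-- Membership in the mixing set with knapsack constraint `Q`. -/
def memQ (n : ℕ) (h a : Fin n → ℝ) (p : ℝ) (y : ℝ) (z : Fin n → ℝ) : Prop :=
  0 ≤ y ∧ (∀ j, z j = 0 ∨ z j = 1) ∧ (∑ j, a j * z j) ≤ p ∧ ∀ j, h j ≤ y + h j * z j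

/-- Partial sum `s_k = ∑_{j ≤ k} a_j` (1-indexed paper notation; here the first `k`
0-based indices). -/
def sk (n : ℕ) (a : Fin n → ℝ) (k : ℕ) : ℝ :=
  ∑ j ∈ univ.filter (fun j : Fin n => (j : ℕ) < k), a j

/-- Membership in the residual knapsack set `P_k`. -/
def memPk (n : ℕ) (a : Fin n → ℝ) (p : ℝ) (k : ℕ) (z : Fin n → ℝ) : Prop :=
  (∀ j, z j = 0 ∨ z j = 1) ∧
    (∑ j ∈ univ.filter (fun j : Fin n => k ≤ (j : ℕ)), a j * z j) ≤ p - sk n a k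

/-- The minimizer function `f_k(α) = min{ ∑_{j > k} α_j z_j : z ∈ P_k }`. -/
noncomputable def fk (n : ℕ) (a : Fin n → ℝ) (p : ℝ) (α : Fin n → ℝ) (k : ℕ) : ℝ :=
  sInf {x : ℝ | ∃ z : Fin n → ℝ, memPk n a p k z ∧
    x = ∑ j ∈ univ.filter (fun j : Fin n => k ≤ (j : ℕ)), α j * z j}

/-- The paper's `Δ[k, l]` is `minSubsetSum {j ∈ S : j > k} Δ (l - |{j ∈ S : j ≤ k}|)`: the sum of
the `r` smallest values of `Δ` on `T`, as a minimum over the `r`-element subsets of `T`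
(`0`, as `sInf ∅`, when there is none). -/
noncomputable def minSubsetSum {ι : Type*} (T : Finset ι) (Δ : ι → ℝ) (r : ℤ) : ℝ :=
  sInf {x : ℝ | ∃ G : Finset ι, G ⊆ T ∧ (G.card : ℤ) = r ∧ x = ∑ j ∈ G, Δ j}

section Counting

variable {ι : Type*} {T : Finset ι} {a z : ι → ℝ}

theorem card_filter_eq_one_le_floor {m c : ℝ} (hm : 0 < m)
    (ha : ∀ j ∈ T, m ≤ a j) (hz : ∀ j ∈ T, z j = 0 ∨ z j = 1)
    (hsum : ∑ j ∈ T, a j * z j ≤ c) :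
    ((T.filter (z · = 1)).card : ℤ) ≤ ⌊c / m⌋ := by
  set Z₁ := T.filter (z · = 1)
  refine Int.le_floor.2 ?_
  rw [Int.cast_natCast, le_div_iff₀ hm]
  calc (Z₁.card : ℝ) * m = ∑ _j ∈ Z₁, m := by rw [sum_const, nsmul_eq_mul]
    _ ≤ ∑ j ∈ Z₁, a j := sum_le_sum fun j hj => ha j (mem_filter.1 hj).1
    _ = ∑ j ∈ Z₁, a j * z j := sum_congr rfl fun j hj => by rw [(mem_filter.1 hj).2, mul_one]
    _ ≤ ∑ j ∈ T, a j * z j := by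
      refine sum_le_sum_of_subset_of_nonneg (filter_subset _ _) fun j hj _ => ?_
      have hzj : 0 ≤ z j := by rcases hz j hj with h | h <;> simp [h]
      exact mul_nonneg (hm.le.trans (ha j hj)) hzj
    _ ≤ c := hsum

theorem minSubsetSum_le_sum_mul_one_sub {Δ : ι → ℝ} {F : ℤ} (hΔ : ∀ j ∈ T, 0 ≤ Δ j)
    (hz : ∀ j ∈ T, z j = 0 ∨ z j = 1) (hF : ((T.filter (z · = 1)).card : ℤ) ≤ F) :
    minSubsetSum T Δ (T.card - F) ≤ ∑ j ∈ T, Δ j * (1 - z j) := by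
  have hterm : ∀ j ∈ T, 0 ≤ Δ j * (1 - z j) := fun j hj =>
    mul_nonneg (hΔ j hj) (by rcases hz j hj with h | h <;> simp [h])
  by_cases hFT : F ≤ T.card
  · set Z₀ := T.filter (z · = 0)
    have hsplit : Z₀.card + (T.filter (z · = 1)).card = T.card := by
      rw [← card_filter_add_card_filter_not (s := T) (p := (z · = 0))]
      congr 2
      exact filter_congr fun j hj => by rcases hz j hj with h | h <;> simp [h]
    obtain ⟨G, hGZ₀, hGcard⟩ :=
      exists_subset_card_eq (s := Z₀) (n := (T.card - F).toNat) (by omega)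
    have hGT : G ⊆ T := hGZ₀.trans (filter_subset _ _)
    have hbdd : BddBelow {x : ℝ | ∃ G' : Finset ι, G' ⊆ T ∧ (G'.card : ℤ) = T.card - F ∧
        x = ∑ j ∈ G', Δ j} := by
      refine ⟨0, ?_⟩
      rintro _ ⟨G', hG'T, -, rfl⟩
      exact sum_nonneg fun j hj => hΔ j (hG'T hj)
    calc minSubsetSum T Δ (T.card - F) ≤ ∑ j ∈ G, Δ j :=
          csInf_le hbdd ⟨G, hGT, by omega, rfl⟩
      _ = ∑ j ∈ G, Δ j * (1 - z j) :=
          sum_congr rfl fun j hj => by rw [(mem_filter.1 (hGZ₀ hj)).2, sub_zero, mul_one]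
      _ ≤ ∑ j ∈ T, Δ j * (1 - z j) :=
          sum_le_sum_of_subset_of_nonneg hGT fun j hj _ => hterm j hj
  · have hempty : {x : ℝ | ∃ G : Finset ι, G ⊆ T ∧ (G.card : ℤ) = T.card - F ∧
        x = ∑ j ∈ G, Δ j} = ∅ :=
      Set.eq_empty_of_forall_notMem fun _ ⟨G, hGT, hGcard, _⟩ => by
        have := card_le_card hGT
        omega
    rw [minSubsetSum, hempty, Real.sInf_empty]
    exact sum_nonneg hterm

end Counting

theorem sk_mono {n : ℕ} {a : Fin n → ℝ} (ha : ∀ j, 0 ≤ a j) : Monotone (sk n a) :=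
  fun _ _ hkl => sum_le_sum_of_subset_of_nonneg
    (fun j hj => by simp only [mem_filter, mem_univ, true_and] at hj ⊢; omega)
    fun j _ _ => ha j

theorem stmt17_general (n : ℕ) (a : Fin n → ℝ) (p : ℝ)
    (hann : ∀ j, 0 ≤ a j)
    (ν : ℕ) (hν1 : sk n a ν ≤ p)
    (S : Finset (Fin n)) (Δ : Fin n → ℝ) (hΔ : ∀ j ∈ S, 0 ≤ Δ j)
    (mS : ℝ) (hmS0 : 0 < mS) (hmSle : ∀ j ∈ S, mS ≤ a j) :
    ∀ k : ℕ, k ≤ ν →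
      sInf {x : ℝ | ∃ G : Finset (Fin n),
          G ⊆ S.filter (fun j : Fin n => k ≤ (j : ℕ)) ∧
          (G.card : ℤ) =
            (((S.filter (fun j : Fin n => k ≤ (j : ℕ))).card : ℤ) -
              ⌊(p - sk n a k) / mS⌋) ∧
          x = ∑ j ∈ G, Δ j} ≤
      sInf {x : ℝ | ∃ z : Fin n → ℝ, memPk n a p k z ∧
          x = ∑ j ∈ S.filter (fun j : Fin n => k ≤ (j : ℕ)), Δ j * (1 - z j)} := by
  intro k hk
  have hres : 0 ≤ p - sk n a k := sub_nonneg.2 ((sk_mono hann hk).trans hν1)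
  refine le_csInf ⟨_, fun _ => 0, ⟨fun _ => Or.inl rfl, by simpa using hres⟩, rfl⟩ ?_
  rintro _ ⟨z, ⟨hz, hzsum⟩, rfl⟩
  refine minSubsetSum_le_sum_mul_one_sub (fun j hj => hΔ j (mem_filter.1 hj).1)
    (fun j _ => hz j) (card_filter_eq_one_le_floor hmS0
      (fun j hj => hmSle j (mem_filter.1 hj).1) (fun j _ => hz j) ?_)
  refine le_trans (sum_le_sum_of_subset_of_nonneg ?_ fun j _ _ => ?_) hzsum
  · exact fun j hj => mem_filter.2 ⟨mem_univ j, (mem_filter.1 hj).2⟩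
  · exact mul_nonneg (hann j) (by rcases hz j with h | h <;> simp [h])

/-- Lower bound on `g_k` via sorted partial sums: `g_k(Δ) ≥ Δ[k, |S| - ⌊(p-s_k)/m_S⌋]`,
where `Δ[k, l]` (the sum of the smallest `l - |{j ∈ S : j ≤ k}|` elements of
`{Δ_j : j ∈ S, j > k}`) is expressed as the minimum of `∑_{j∈G} Δ_j` over subsets
`G` of `{j ∈ S : j > k}` of that cardinality. -/
theorem stmt17 (n : ℕ) (hn : 0 < n) (a : Fin n → ℝ) (p : ℝ)
    (hann : ∀ j, 0 ≤ a j) (hap : ∀ j, a j ≤ p) (hsum : p < ∑ j, a j)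
    (ν : ℕ) (hνn : ν < n) (hν1 : sk n a ν ≤ p) (hν2 : p < sk n a (ν + 1))
    (S : Finset (Fin n)) (Δ : Fin n → ℝ) (hΔ : ∀ j ∈ S, 0 ≤ Δ j)
    (mS : ℝ) (hmS0 : 0 < mS) (hmSle : ∀ j ∈ S, mS ≤ a j)
    (hmSmem : ∃ j ∈ S, a j = mS) :
    ∀ k : ℕ, k ≤ ν →
      sInf {x : ℝ | ∃ G : Finset (Fin n),
          G ⊆ S.filter (fun j : Fin n => k ≤ (j : ℕ)) ∧
          (G.card : ℤ) =
            (((S.filter (fun j : Fin n => k ≤ (j : ℕ))).card : ℤ) -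
              ⌊(p - sk n a k) / mS⌋) ∧
          x = ∑ j ∈ G, Δ j} ≤
      sInf {x : ℝ | ∃ z : Fin n → ℝ, memPk n a p k z ∧
          x = ∑ j ∈ S.filter (fun j : Fin n => k ≤ (j : ℕ)), Δ j * (1 - z j)} :=
  stmt17_general n a p hann ν hν1 S Δ hΔ mS hmS0 hmSle
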